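/- arXiv:2103.04151 — 7 statements merged into one kernel-verified Lean document; each statement's English description precedes it below -/
import Mathlib

section
/- Lengyel's identity: for |x| < 1, (1+x)/(1-x) = ∑_{n=1}^∞ x^{⌊n/φ⌋} + ∑_{n=1}^∞ x^{⌊n φ²⌋}, where φ = (1+√5)/2 is the golden ratio. -/
open Real goldenRatio

/-!
For irrational `s > 0`, `⌊(n + 1)/s⌋ = m` exactly when `⌊ms⌋ ≤ n < ⌊(m + 1)s⌋`. As `φ⁻² = 2 - φ`,
the exponent `m` therefore occurs `a (m + 1) - a m + b (m + 1) - b m` times in the two series, where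
`a k = ⌊kφ⌋` and `b k = ⌊k(2 - φ)⌋`. Since `kφ + k(2 - φ) = 2k` with both terms irrational,
`a k + b k = 2k - 1` for `k ≥ 1`: the exponent `0` occurs once and every other exponent twice,
just as in `∑ xᵐ + ∑ xᵐ⁺¹ = (1 + x)/(1 - x)`. Matching the fibres gives a bijection of the index sets
carrying one family of exponents to the other.
-/

theorem exists_equiv_of_fiber_equiv_fin {α β γ : Type*} {f : α → γ} {g : β → γ}
    {c : γ → ℕ} (hf : ∀ y, Nonempty ({a // f a = y} ≃ Fin (c y)))
    (hg : ∀ y, Nonempty ({b // g b = y} ≃ Fin (c y))) :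
    ∃ e : α ≃ β, ∀ a, g (e a) = f a :=
  ⟨.ofFiberEquiv fun y => (hf y).some.trans (hg y).some.symm, Equiv.ofFiberEquiv_map _⟩

theorem nonempty_equiv_fin_of_iff_Ico {p : ℕ → Prop} {lo hi : ℕ}
    (h : ∀ n, p n ↔ lo ≤ n ∧ n < hi) : Nonempty ({n // p n} ≃ Fin (hi - lo)) :=
  ⟨(Equiv.subtypeEquivRight fun n => by rw [h, Finset.mem_Ico]).trans
    ((Finset.Ico lo hi).equivFin.trans (finCongr (Nat.card_Ico lo hi)))⟩

theorem nonempty_fiber_sumElim_equiv_fin {α β γ : Type*} {f : α → γ} {g : β → γ} {y : γ}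
    {k l : ℕ} (hf : Nonempty ({a // f a = y} ≃ Fin k))
    (hg : Nonempty ({b // g b = y} ≃ Fin l)) :
    Nonempty ({s // Sum.elim f g s = y} ≃ Fin (k + l)) :=
  ⟨Equiv.subtypeSum.trans ((hf.some.sumCongr hg.some).trans finSumFinEquiv)⟩

theorem natFloor_add_one_div_eq_iff {s : ℝ} (hs : 0 < s) (hirr : Irrational s) (n m : ℕ) :
    ⌊((n : ℝ) + 1) / s⌋₊ = m ↔ ⌊(m : ℝ) * s⌋₊ ≤ n ∧ n < ⌊((m + 1 : ℕ) : ℝ) * s⌋₊ := by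
  have hne : ∀ k : ℕ, (k : ℝ) * s ≠ n + 1 := by
    intro k
    rcases eq_or_ne k 0 with rfl | hk
    · simp only [Nat.cast_zero, zero_mul]; positivity
    · exact_mod_cast (irrational_natCast_mul_iff.mpr ⟨hk, hirr⟩).ne_nat (n + 1)
  rw [Nat.floor_eq_iff (by positivity), le_div_iff₀ hs, div_lt_iff₀ hs, ← Nat.lt_succ_iff,
    Nat.floor_lt (by positivity), ← Nat.succ_le_iff, Nat.le_floor_iff (by positivity)]
  have hne' : (n : ℝ) + 1 ≠ ((m + 1 : ℕ) : ℝ) * s := (hne (m + 1)).symm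
  push_cast at hne' ⊢
  exact ⟨fun ⟨h, h'⟩ => ⟨h.lt_of_ne (hne m), h'.le⟩, fun ⟨h, h'⟩ => ⟨h.le, h'.lt_of_ne hne'⟩⟩

theorem natFloor_add_natFloor_add_one_of_add_eq {a b : ℝ} {N : ℕ} (ha : 0 ≤ a) (hb : 0 ≤ b)
    (hirr : Irrational a) (hab : a + b = N) : ⌊a⌋₊ + ⌊b⌋₊ + 1 = N := by
  have hb' : Irrational b := by
    rw [eq_sub_of_add_eq' hab]; exact hirr.natCast_sub N
  have ha₁ : (⌊a⌋₊ : ℝ) < a := (Nat.floor_le ha).lt_of_ne (hirr.ne_nat _).symm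
  have hb₁ : (⌊b⌋₊ : ℝ) < b := (Nat.floor_le hb).lt_of_ne (hb'.ne_nat _).symm
  have ha₂ := Nat.lt_floor_add_one a
  have hb₂ := Nat.lt_floor_add_one b
  have hlt : ⌊a⌋₊ + ⌊b⌋₊ < N := by exact_mod_cast (by linarith : (⌊a⌋₊ + ⌊b⌋₊ : ℝ) < N)
  have hgt : N < ⌊a⌋₊ + ⌊b⌋₊ + 2 := by
    exact_mod_cast (by linarith : (N : ℝ) < ⌊a⌋₊ + ⌊b⌋₊ + 2)
  omega

theorem hasSum_pow_sumElim_id_add_one {x : ℝ} (hx : |x| < 1) :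
    HasSum (fun s : ℕ ⊕ ℕ => x ^ Sum.elim id (· + 1) s) ((1 + x) / (1 - x)) := by
  have hgeom := hasSum_geometric_of_abs_lt_one hx
  have hgeom_succ : HasSum (fun n : ℕ => x ^ (n + 1)) ((1 - x)⁻¹ * x) := by
    simpa only [← pow_succ] using hgeom.mul_right x
  have hne : 1 - x ≠ 0 := by linarith [(abs_lt.mp hx).2]
  convert HasSum.sum (f := fun s : ℕ ⊕ ℕ => x ^ Sum.elim id (· + 1) s) hgeom hgeom_succ using 1
  field_simp

theorem natFloor_mul_goldenRatio_add_natFloor_mul_two_sub_goldenRatio {k : ℕ} (hk : k ≠ 0) :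
    ⌊(k : ℝ) * φ⌋₊ + ⌊(k : ℝ) * (2 - φ)⌋₊ + 1 = 2 * k :=
  natFloor_add_natFloor_add_one_of_add_eq (by positivity)
    (mul_nonneg k.cast_nonneg (by linarith [goldenRatio_lt_two]))
    (irrational_natCast_mul_iff.mpr ⟨hk, goldenRatio_irrational⟩) (by push_cast; ring)

theorem exists_equiv_lengyel_exponents :
    ∃ e : ℕ ⊕ ℕ ≃ ℕ ⊕ ℕ, ∀ s, Sum.elim (fun n : ℕ => ⌊((n : ℝ) + 1) / φ⌋₊)
      (fun n : ℕ => ⌊((n : ℝ) + 1) * φ ^ 2⌋₊) (e s) = Sum.elim id (· + 1) s := by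
  have hinv_sq : (φ ^ 2)⁻¹ = 2 - φ :=
    inv_eq_of_mul_eq_one_left (by linear_combination (1 - φ) * goldenRatio_sq)
  have hpos : 0 < 2 - φ := by linarith [goldenRatio_lt_two]
  have hirr : Irrational (2 - φ) := goldenRatio_irrational.natCast_sub 2
  have hcount : ∀ m : ℕ, ⌊((m + 1 : ℕ) : ℝ) * φ⌋₊ - ⌊(m : ℝ) * φ⌋₊ +
      (⌊((m + 1 : ℕ) : ℝ) * (2 - φ)⌋₊ - ⌊(m : ℝ) * (2 - φ)⌋₊) = m + 1 - m + (m - (m - 1)) := by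
    intro m
    have h₁ :=
      natFloor_mul_goldenRatio_add_natFloor_mul_two_sub_goldenRatio (k := m + 1) m.succ_ne_zero
    rcases eq_or_ne m 0 with rfl | hm
    · simp only [Nat.cast_zero, zero_mul, Nat.floor_zero] at h₁ ⊢
      omega
    have h₀ := natFloor_mul_goldenRatio_add_natFloor_mul_two_sub_goldenRatio hm
    have hmono₁ : ⌊(m : ℝ) * φ⌋₊ ≤ ⌊((m + 1 : ℕ) : ℝ) * φ⌋₊ :=
      Nat.floor_le_floor (by gcongr; simp)
    have hmono₂ : ⌊(m : ℝ) * (2 - φ)⌋₊ ≤ ⌊((m + 1 : ℕ) : ℝ) * (2 - φ)⌋₊ :=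
      Nat.floor_le_floor (by gcongr; simp)
    omega
  -- `c m` is the fibre size `(m + 1 - m) + (m - (m - 1))` of `Sum.elim id (· + 1)`
  refine exists_equiv_of_fiber_equiv_fin (c := fun m => m + 1 - m + (m - (m - 1)))
    (fun m => nonempty_fiber_sumElim_equiv_fin
      (nonempty_equiv_fin_of_iff_Ico fun n => by simp only [id]; omega)
      (nonempty_equiv_fin_of_iff_Ico fun n => by omega))
    (fun m => hcount m ▸ nonempty_fiber_sumElim_equiv_fin
      (nonempty_equiv_fin_of_iff_Ico (natFloor_add_one_div_eq_iff goldenRatio_pos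
        goldenRatio_irrational · m))
      (nonempty_equiv_fin_of_iff_Ico fun n => ?_))
  rw [← div_inv_eq_mul, hinv_sq]
  exact natFloor_add_one_div_eq_iff hpos hirr n m

/-- Lengyel's identity: for `|x| < 1`,
`(1+x)/(1-x) = ∑_{n≥1} x^⌊n/φ⌋ + ∑_{n≥1} x^⌊nφ²⌋`, with `φ` the golden ratio. -/
theorem lengyel_identity (x : ℝ) (hx : |x| < 1) :
    (1 + x) / (1 - x) =
      (∑' n : ℕ, x ^ (⌊((n : ℝ) + 1) / ((1 + Real.sqrt 5) / 2)⌋₊)) +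
        ∑' n : ℕ, x ^ (⌊((n : ℝ) + 1) * ((1 + Real.sqrt 5) / 2) ^ 2⌋₊) := by
  obtain ⟨e, he⟩ := exists_equiv_lengyel_exponents
  have hsum : HasSum (fun s => x ^ Sum.elim (fun n : ℕ => ⌊((n : ℝ) + 1) / φ⌋₊)
      (fun n : ℕ => ⌊((n : ℝ) + 1) * φ ^ 2⌋₊) s) ((1 + x) / (1 - x)) :=
    e.hasSum_iff.mp (by simpa only [Function.comp_def, he] using hasSum_pow_sumElim_id_add_one hx)
  exact hsum.tsum_eq.symm.trans <| Summable.tsum_sum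
    (hsum.summable.comp_injective Sum.inl_injective)
    (hsum.summable.comp_injective Sum.inr_injective)
end

section
/- The numbers d_{r,n}^B of type B r-derangements on [n+r] satisfy the recurrence d_{r,n}^B = d_{r-1,n}^B + 2n * d_{r,n-1}^B + 2n * d_{r-1,n-1}^B for n, r ≥ 1, with initial conditions d_{r,0}^B = 1 and d_{0,n}^B = n! * ∑_{k=0}^{n} (-1)^k * 2^{n-k} / k!. -/
open Finset

/-- `d_{r,n}^B`, via the explicit formula
`2^n ∑_i C(r,i) n^(falling i) 2^i ∑_k C(n-i,k) (-1)^k (i+1)^(rising n-i-k) 2^{-k}`. -/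
def dB (r n : ℕ) : ℚ :=
  2 ^ n * ∑ i ∈ Finset.range (r + 1),
    (r.choose i : ℚ) * (n.descFactorial i) * 2 ^ i *
      ∑ k ∈ Finset.range (n - i + 1),
        ((n - i).choose k : ℚ) * (-1) ^ k * ((i + 1).ascFactorial (n - i - k)) / 2 ^ k

/-!
Reindexing the inner sum by `j = n - i - k` writes `d_{r,n}^B = ∑ᵢ C(r,i) Tₙ(i)` with
`Tₙ(i) = n^(falling i) 4^i gᵢ(n-i)` and `gᵢ(m) = ∑ⱼ C(m,j) (-1)^(m-j) 2^j (i+1)^(rising j)`.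
Pascal's rule in `r` gives `d_{r+1,n} = d_{r,n} + ∑ᵢ C(r,i) Tₙ(i+1)`, and the identity
`(i+2)^(rising (j+1)) - (i+1)^(rising (j+1)) = (j+1) (i+2)^(rising j)` gives
`g_{i+1}(m) = gᵢ(m) + 2m g_{i+1}(m-1)`, hence `T_{n+1}(i+1) = 2(n+1) Tₙ(i+1) + 4(n+1) Tₙ(i)`.
Summing against `C(r,i)` yields the recurrence.
-/

theorem succ_ascFactorial_succ_eq_add (n k : ℕ) :
    (n + 1).ascFactorial (k + 1) = n.ascFactorial (k + 1) + (k + 1) * (n + 1).ascFactorial k := by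
  have h := Nat.succ_ascFactorial n k
  rw [Nat.ascFactorial_succ, Nat.ascFactorial_succ, ← h]
  ring

def dBInner (i m : ℕ) : ℚ :=
  ∑ j ∈ range (m + 1), (m.choose j : ℚ) * (-1) ^ (m - j) * 2 ^ j * (i + 1).ascFactorial j

theorem dBInner_zero_right (i : ℕ) : dBInner i 0 = 1 := by
  simp [dBInner]

theorem dBInner_succ_left (i m : ℕ) :
    dBInner (i + 1) m = dBInner i m + 2 * m * dBInner (i + 1) (m - 1) := by
  obtain _ | m := m
  · simp [dBInner_zero_right]
  suffices dBInner (i + 1) (m + 1) - dBInner i (m + 1) = 2 * (m + 1) * dBInner (i + 1) m by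
    push_cast
    linear_combination this
  rw [dBInner, dBInner, dBInner, ← sum_sub_distrib, sum_range_succ', mul_sum]
  simp only [Nat.choose_zero_right, Nat.ascFactorial_zero, pow_zero, sub_self, add_zero]
  refine sum_congr rfl fun j hj => ?_
  have hj : j ≤ m := Nat.lt_succ_iff.mp (mem_range.mp hj)
  have hchoose : ((m + 1).choose (j + 1) : ℚ) * (j + 1) = (m + 1) * m.choose j := by
    exact_mod_cast (Nat.add_one_mul_choose_eq m j).symm
  have hasc : ((i + 1 + 1).ascFactorial (j + 1) : ℚ) =
      (i + 1).ascFactorial (j + 1) + (j + 1) * (i + 1 + 1).ascFactorial j := by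
    exact_mod_cast succ_ascFactorial_succ_eq_add (i + 1) j
  rw [show m + 1 - (j + 1) = m - j by omega, hasc]
  linear_combination (-1 : ℚ) ^ (m - j) * 2 ^ (j + 1) * ((i + 1 + 1).ascFactorial j) * hchoose

theorem two_pow_mul_sum_eq_dBInner (i m : ℕ) :
    2 ^ m * ∑ k ∈ range (m + 1),
      (m.choose k : ℚ) * (-1) ^ k * ((i + 1).ascFactorial (m - k)) / 2 ^ k = dBInner i m := by
  rw [dBInner, ← sum_range_reflect, mul_sum]
  refine sum_congr rfl fun k hk => ?_
  have hk : k ≤ m := Nat.lt_succ_iff.mp (mem_range.mp hk)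
  rw [show m + 1 - 1 - k = m - k by omega, Nat.choose_symm hk, Nat.sub_sub_self hk,
    show (2 : ℚ) ^ m = 2 ^ (m - k) * 2 ^ k by rw [← pow_add, Nat.sub_add_cancel hk]]
  field_simp

def dBTerm (n i : ℕ) : ℚ :=
  n.descFactorial i * 4 ^ i * dBInner i (n - i)

theorem dB_eq_sum_choose_mul_dBTerm (r n : ℕ) :
    dB r n = ∑ i ∈ range (r + 1), (r.choose i : ℚ) * dBTerm n i := by
  rw [dB, mul_sum]
  refine sum_congr rfl fun i _ => ?_
  rcases le_or_gt i n with hi | hi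
  · rw [dBTerm, ← two_pow_mul_sum_eq_dBInner,
      show (2 : ℚ) ^ n = 2 ^ i * 2 ^ (n - i) by rw [← pow_add, Nat.add_sub_cancel' hi],
      show (4 : ℚ) ^ i = 2 ^ i * 2 ^ i by rw [← mul_pow]; norm_num]
    ring
  · simp [dBTerm, Nat.descFactorial_eq_zero_iff_lt.mpr hi]

theorem dBTerm_succ_succ (n i : ℕ) :
    dBTerm (n + 1) (i + 1) = 2 * (n + 1) * dBTerm n (i + 1) + 4 * (n + 1) * dBTerm n i := by
  have hdesc : ((n + 1).descFactorial (i + 1) : ℚ) = (n + 1) * n.descFactorial i := by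
    rw [Nat.succ_descFactorial_succ]; push_cast; ring
  have hdesc' : (n.descFactorial (i + 1) : ℚ) = ((n - i : ℕ) : ℚ) * n.descFactorial i := by
    rw [Nat.descFactorial_succ]; push_cast; ring
  rw [dBTerm, dBTerm, dBTerm, hdesc, hdesc', show n + 1 - (i + 1) = n - i by omega,
    show n - (i + 1) = n - i - 1 by omega, dBInner_succ_left i (n - i)]
  ring

theorem dB_succ_left (r n : ℕ) :
    dB (r + 1) n = dB r n + ∑ i ∈ range (r + 1), (r.choose i : ℚ) * dBTerm n (i + 1) := by
  simp only [dB_eq_sum_choose_mul_dBTerm]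
  exact sum_choose_succ_mul (fun i _ => dBTerm n i) r

theorem dB_succ_succ (r n : ℕ) :
    dB (r + 1) (n + 1) = dB r (n + 1) + 2 * (n + 1) * dB (r + 1) n + 2 * (n + 1) * dB r n := by
  have hterms : ∑ i ∈ range (r + 1), (r.choose i : ℚ) * dBTerm (n + 1) (i + 1) =
      2 * (n + 1) * ∑ i ∈ range (r + 1), (r.choose i : ℚ) * dBTerm n (i + 1) +
        4 * (n + 1) * ∑ i ∈ range (r + 1), (r.choose i : ℚ) * dBTerm n i := by
    simp only [dBTerm_succ_succ, mul_sum, ← sum_add_distrib]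
    exact sum_congr rfl fun i _ => by ring
  rw [dB_succ_left r (n + 1), hterms, dB_succ_left r n, dB_eq_sum_choose_mul_dBTerm r n]
  ring

theorem dB_zero_right (r : ℕ) : dB r 0 = 1 := by
  rw [dB_eq_sum_choose_mul_dBTerm, sum_eq_single 0]
  · simp [dBTerm, dBInner_zero_right]
  · intro i _ hi
    simp [dBTerm, Nat.descFactorial_eq_zero_iff_lt.mpr (Nat.pos_of_ne_zero hi)]
  · simp

theorem dB_zero_left (n : ℕ) :
    dB 0 n = n.factorial * ∑ k ∈ range (n + 1), (-1 : ℚ) ^ k * 2 ^ (n - k) / k.factorial := by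
  simp only [dB, zero_add, sum_range_one, Nat.choose_self, Nat.descFactorial_zero, Nat.sub_zero,
    Nat.cast_one, pow_zero, one_mul, mul_one, Nat.one_ascFactorial, mul_sum]
  refine sum_congr rfl fun k hk => ?_
  have hk : k ≤ n := Nat.lt_succ_iff.mp (mem_range.mp hk)
  have hfact : (n.choose k : ℚ) * k.factorial * (n - k).factorial = n.factorial := by
    exact_mod_cast Nat.choose_mul_factorial_mul_factorial hk
  rw [show (2 : ℚ) ^ n = 2 ^ k * 2 ^ (n - k) by rw [← pow_add, Nat.add_sub_cancel' hk]]
  field_simp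
  linear_combination hfact

/-- The recurrence `d_{r,n}^B = d_{r-1,n}^B + 2n d_{r,n-1}^B + 2n d_{r-1,n-1}^B`
together with the initial conditions. -/
theorem dB_recurrence :
    (∀ r : ℕ, dB r 0 = 1) ∧
      (∀ n : ℕ, dB 0 n =
        (n.factorial : ℚ) *
          ∑ k ∈ Finset.range (n + 1), (-1 : ℚ) ^ k * 2 ^ (n - k) / (k.factorial : ℚ)) ∧
      ∀ r n : ℕ, 1 ≤ r → 1 ≤ n →
        dB r n = dB (r - 1) n + 2 * n * dB r (n - 1) + 2 * n * dB (r - 1) (n - 1) := by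
  refine ⟨dB_zero_right, dB_zero_left, fun r n hr hn => ?_⟩
  obtain ⟨r, rfl⟩ := Nat.exists_eq_add_of_le' hr
  obtain ⟨n, rfl⟩ := Nat.exists_eq_add_of_le' hn
  simpa using dB_succ_succ r n
end

section
/- The explicit formula d_{r,n}^B = 2^n * ∑_{i=0}^{r} C(r,i) * n^{\underline{i}} * 2^i * ∑_{k=0}^{n-i} C(n-i,k) * (-1)^k * (i+1)^{\overline{n-i-k}} * 2^{-k} holds, where d_{r,n}^B is defined by the recurrence d_{r,n}^B = d_{r-1,n}^B + 2n d_{r,n-1}^B + 2n d_{r-1,n-1}^B with d_{r,0}^B = 1 and d_{0,n}^B = n! ∑_{k=0}^n (-1)^k 2^{n-k}/k!. -/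
open Finset

/-! The explicit sum satisfies the defining recurrence of `dRec`, so the two agree by induction.
Write the inner sum as `altAscSum i m`. The identity
`(i+2)^{\overline{s}} = (i+1)^{\overline{s}} + s (i+2)^{\overline{s-1}}` gives
`altAscSum (i+1) m = altAscSum i m + m * altAscSum (i+1) (m-1)`, which combined with Pascal's rule
for `C(r+1, i)` yields the recurrence in `r` and `n`. For `r = 0` the sum collapses to
`n! ∑ (-1)^k 2^{n-k} / k!` because `C(n,k) (n-k)! = n!/k!`. -/

/-- `d_{r,n}^B`, defined by the recurrence
`d_{r,n} = d_{r-1,n} + 2n d_{r,n-1} + 2n d_{r-1,n-1}` with `d_{r,0} = 1` and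
`d_{0,n} = n! ∑_{k=0}^n (-1)^k 2^{n-k}/k!`. -/
def dRec : ℕ → ℕ → ℚ
  | _, 0 => 1
  | 0, n + 1 =>
      ((n + 1).factorial : ℚ) *
        ∑ k ∈ Finset.range (n + 2), (-1 : ℚ) ^ k * 2 ^ (n + 1 - k) / (k.factorial : ℚ)
  | r + 1, n + 1 =>
      dRec r (n + 1) + 2 * (n + 1) * dRec (r + 1) n + 2 * (n + 1) * dRec r n
  termination_by r n => (r, n)

theorem Nat.ascFactorial_add_one_left (n k : ℕ) :
    (n + 1).ascFactorial k = n.ascFactorial k + k * (n + 1).ascFactorial (k - 1) := by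
  cases k with
  | zero => simp
  | succ k =>
    rw [ascFactorial_succ, ascFactorial_succ, ← succ_ascFactorial n k, Nat.add_sub_cancel]
    ring

theorem Nat.choose_mul_ascFactorial_add_one_left (n s k : ℕ) :
    (s + 1).choose k * (n + 1).ascFactorial (s + 1 - k)
      = (s + 1).choose k * n.ascFactorial (s + 1 - k)
        + (s + 1) * (s.choose k * (n + 1).ascFactorial (s - k)) := by
  have hchoose : (s + 1).choose k * (s + 1 - k) = s.choose k * (s + 1) :=
    (choose_mul_succ_eq s k).symm
  rw [ascFactorial_add_one_left, show s + 1 - k - 1 = s - k by omega]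
  linear_combination (n + 1).ascFactorial (s - k) * hchoose

theorem Finset.sum_range_choose_succ_mul {R : Type*} [Semiring R] (r : ℕ) (t : ℕ → R) :
    ∑ i ∈ range (r + 2), ((r + 1).choose i : R) * t i
      = ∑ i ∈ range (r + 1), (r.choose i : R) * t i
        + ∑ i ∈ range (r + 1), (r.choose i : R) * t (i + 1) := by
  rw [sum_range_succ' _ (r + 1), sum_range_succ' (fun i => (r.choose i : R) * t i) r]
  simp only [Nat.choose_succ_succ, Nat.cast_add, add_mul, sum_add_distrib, Nat.choose_zero_right]
  rw [sum_range_succ (fun j => (r.choose (j + 1) : R) * t (j + 1)) r]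
  simp only [Nat.choose_succ_self, Nat.cast_zero, zero_mul, add_zero]
  abel

def altAscSum (i m : ℕ) : ℚ :=
  ∑ k ∈ range (m + 1), (m.choose k : ℚ) * (-1) ^ k * ((i + 1).ascFactorial (m - k)) / 2 ^ k

theorem altAscSum_zero_right (i : ℕ) : altAscSum i 0 = 1 := by
  simp [altAscSum]

theorem altAscSum_add_one_left (i m : ℕ) :
    altAscSum (i + 1) m = altAscSum i m + m * altAscSum (i + 1) (m - 1) := by
  cases m with
  | zero => simp [altAscSum_zero_right]
  | succ s =>
    have htop : ((s + 1 : ℕ) : ℚ) * altAscSum (i + 1) s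
        = ∑ k ∈ range (s + 2), ((s + 1 : ℕ) : ℚ) *
            ((s.choose k : ℚ) * (-1) ^ k * ((i + 2).ascFactorial (s - k)) / 2 ^ k) := by
      simp [altAscSum, mul_sum, sum_range_succ _ (s + 1)]
    rw [Nat.add_sub_cancel, htop, altAscSum, altAscSum, ← sum_add_distrib]
    refine sum_congr rfl fun k _ => ?_
    have h := Nat.choose_mul_ascFactorial_add_one_left (i + 1) s k
    apply_fun ((↑) : ℕ → ℚ) at h
    push_cast at h ⊢
    linear_combination (-1 : ℚ) ^ k / 2 ^ k * h

def dSummand (n i : ℕ) : ℚ :=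
  n.descFactorial i * 2 ^ i * altAscSum i (n - i)

def dExplicit (r n : ℕ) : ℚ :=
  2 ^ n * ∑ i ∈ range (r + 1), (r.choose i : ℚ) * dSummand n i

theorem dSummand_succ_succ (n j : ℕ) :
    dSummand (n + 1) (j + 1) = (n + 1) * (2 * dSummand n j + dSummand n (j + 1)) := by
  have hdesc : ((n + 1).descFactorial (j + 1) : ℚ) = (n + 1) * n.descFactorial j := by
    exact_mod_cast Nat.succ_descFactorial_succ n j
  have hdesc' : (n.descFactorial (j + 1) : ℚ) = ((n - j : ℕ) : ℚ) * n.descFactorial j := by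
    exact_mod_cast Nat.descFactorial_succ n j
  have hsum := altAscSum_add_one_left j (n - j)
  rw [dSummand, dSummand, dSummand, Nat.add_sub_add_right, hdesc, hdesc', Nat.sub_succ']
  linear_combination (n + 1) * 2 ^ (j + 1) * (n.descFactorial j : ℚ) * hsum

theorem dExplicit_zero_right (r : ℕ) : dExplicit r 0 = 1 := by
  simp [dExplicit, dSummand, sum_range_succ', altAscSum_zero_right]

theorem dExplicit_zero_left (n : ℕ) :
    dExplicit 0 n = n.factorial * ∑ k ∈ range (n + 1), (-1 : ℚ) ^ k * 2 ^ (n - k) / k.factorial := by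
  simp only [dExplicit, dSummand, altAscSum, zero_add, Nat.one_ascFactorial, sum_range_one,
    Nat.choose_zero_right, Nat.descFactorial_zero, Nat.sub_zero, Nat.cast_one, pow_zero, one_mul,
    mul_sum]
  refine sum_congr rfl fun k hk => ?_
  have hk : k ≤ n := Nat.lt_succ_iff.mp (mem_range.mp hk)
  rw [Nat.cast_choose ℚ hk, ← Nat.sub_add_cancel hk, pow_add, Nat.add_sub_cancel]
  field_simp

theorem dExplicit_succ_succ (r n : ℕ) :
    dExplicit (r + 1) (n + 1)
      = dExplicit r (n + 1) + 2 * (n + 1) * dExplicit (r + 1) n + 2 * (n + 1) * dExplicit r n := by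
  have hshift : ∑ i ∈ range (r + 1), (r.choose i : ℚ) * dSummand (n + 1) (i + 1)
      = (n + 1) * (2 * ∑ i ∈ range (r + 1), (r.choose i : ℚ) * dSummand n i
          + ∑ i ∈ range (r + 1), (r.choose i : ℚ) * dSummand n (i + 1)) := by
    rw [mul_sum, ← sum_add_distrib, mul_sum]
    refine sum_congr rfl fun i _ => ?_
    rw [dSummand_succ_succ]
    ring
  simp only [dExplicit, sum_range_choose_succ_mul, hshift]
  ring

theorem dRec_eq_dExplicit (r n : ℕ) : dRec r n = dExplicit r n := by
  induction r generalizing n with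
  | zero =>
    cases n with
    | zero => rw [dRec, dExplicit_zero_right]
    | succ n => rw [dRec, dExplicit_zero_left]
  | succ r ih =>
    induction n with
    | zero => rw [dRec, dExplicit_zero_right]
    | succ n ihn => rw [dRec, ih, ih, ihn, dExplicit_succ_succ]

/-- The explicit formula for `d_{r,n}^B`. -/
theorem dRec_explicit (r n : ℕ) :
    dRec r n =
      2 ^ n * ∑ i ∈ Finset.range (r + 1),
        (r.choose i : ℚ) * (n.descFactorial i) * 2 ^ i *
          ∑ k ∈ Finset.range (n - i + 1),
            ((n - i).choose k : ℚ) * (-1) ^ k * ((i + 1).ascFactorial (n - i - k)) / 2 ^ k := by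
  rw [dRec_eq_dExplicit, dExplicit]
  simp only [dSummand, altAscSum, mul_assoc]
end

section
/- For each fixed n ≥ 0, the map r ↦ d_{r,n}^B extends to a polynomial in r of degree n, where d_{r,n}^B satisfies d_{r,0}^B = 1 and d_{r,n}^B - d_{r-1,n}^B = 2n (d_{r,n-1}^B + d_{r-1,n-1}^B). -/
open Finset Polynomial

lemma s_degree (m : ℕ) : ((X + 1 : ℚ[X]) ^ (m+1) - X ^ (m+1)).degree = (m : WithBot ℕ) ∧
    ((X + 1 : ℚ[X]) ^ (m+1) - X ^ (m+1)).coeff m = ((m : ℚ) + 1) := by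
  have hc : ∀ k, ((X + 1 : ℚ[X]) ^ (m+1) - X ^ (m+1)).coeff k
      = ((m+1).choose k : ℚ) - if m+1 = k then 1 else 0 := by
    intro k
    simp [coeff_X_add_one_pow, coeff_X_pow, eq_comm]
  have hm : ((X + 1 : ℚ[X]) ^ (m+1) - X ^ (m+1)).coeff m = ((m : ℚ) + 1) := by
    rw [hc, if_neg (by omega), Nat.choose_succ_self_right]
    push_cast; ring
  refine ⟨le_antisymm ?_ (le_degree_of_ne_zero (by rw [hm]; positivity)), hm⟩
  rw [degree_le_iff_coeff_zero]
  intro k hk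
  have hk' : m < k := by exact_mod_cast hk
  rw [hc]
  rcases lt_or_eq_of_le (Nat.succ_le_of_lt hk') with h | h
  · rw [Nat.choose_eq_zero_of_lt h, if_neg (by omega)]; simp
  · rw [← h]; simp [Nat.choose_self]

lemma exists_antideriv : ∀ d : ℕ, ∀ q : ℚ[X], q.natDegree ≤ d →
    ∃ P : ℚ[X], P.comp (X + 1) - P = q ∧ P.degree = q.degree + 1 := by
  intro d
  induction d using Nat.strong_induction_on with
  | _ d ih =>
    intro q hq
    by_cases h0 : q = 0
    · exact ⟨0, by simp [h0], by simp [h0]⟩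
    set m := q.natDegree with hm
    set a := q.leadingCoeff with ha
    have ha0 : a ≠ 0 := leadingCoeff_ne_zero.mpr h0
    set c : ℚ := a / (m + 1) with hcdef
    have hc0 : c ≠ 0 := by
      simp only [hcdef, div_ne_zero_iff]
      exact ⟨ha0, by positivity⟩
    set P0 : ℚ[X] := C c * X ^ (m + 1) with hP0
    set s : ℚ[X] := (X + 1 : ℚ[X]) ^ (m+1) - X ^ (m+1) with hs
    obtain ⟨hsdeg, hscoeff⟩ := s_degree m
    have hsnd : s.natDegree = m := natDegree_eq_of_degree_eq_some hsdeg
    have hslead : s.leadingCoeff = (m : ℚ) + 1 := by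
      rw [leadingCoeff, hsnd, hscoeff]
    have hΔP0 : P0.comp (X + 1) - P0 = C c * s := by
      rw [hP0, hs, mul_comp, pow_comp, C_comp, X_comp, mul_sub]
    have hrdeg : (C c * s).degree = (m : WithBot ℕ) := by
      rw [degree_C_mul hc0, hsdeg]
    have hrlead : (C c * s).leadingCoeff = a := by
      rw [leadingCoeff_mul, leadingCoeff_C, hslead, hcdef]
      field_simp
    have hqdeg : q.degree = (m : WithBot ℕ) := degree_eq_natDegree h0
    have hsub : (q - C c * s).degree < (m : WithBot ℕ) := by
      rw [← hqdeg]
      exact degree_sub_lt (hqdeg.trans hrdeg.symm) h0 hrlead.symm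
    have hP0deg : P0.degree = ((m : WithBot ℕ) + 1) := by
      rw [hP0, degree_C_mul_X_pow _ hc0]
      push_cast
      rfl
    rcases Nat.eq_zero_or_pos m with hm0 | hmpos
    · -- m = 0 : q - C c * s has degree < 0 hence is 0
      have h1 : q - C c * s = 0 := by
        rw [← degree_eq_bot]
        rw [hm0] at hsub
        exact Nat.WithBot.lt_zero_iff.mp (by exact_mod_cast hsub)
      refine ⟨P0, ?_, by rw [hP0deg, hqdeg]⟩
      rw [hΔP0, ← sub_eq_zero, ← neg_eq_zero]
      rw [← h1]; ring
    · -- m ≥ 1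
      have hq1nd : (q - C c * s).natDegree ≤ m - 1 := by
        by_cases hz : q - C c * s = 0
        · simp [hz]
        · have := natDegree_lt_natDegree hz (hsub.trans_eq hqdeg.symm)
          omega
      obtain ⟨P1, hP1, hP1deg⟩ := ih (m - 1) (by omega) (q - C c * s) hq1nd
      refine ⟨P0 + P1, ?_, ?_⟩
      · rw [add_comp]
        have : P0.comp (X+1) + P1.comp (X+1) - (P0 + P1)
            = (P0.comp (X+1) - P0) + (P1.comp (X+1) - P1) := by ring
        rw [this, hΔP0, hP1, ]
        ring
      · have hP1lt : P1.degree < P0.degree := by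
          rw [hP1deg, hP0deg]
          have h3 : (q - C c * s).degree < (m : WithBot ℕ) := hsub
          exact WithBot.add_lt_add_right (by simp) h3
        rw [degree_add_eq_left_of_degree_lt hP1lt, hP0deg, hqdeg]

/-- For fixed `n`, `r ↦ d_{r,n}^B` is a polynomial in `r` of degree `n`. -/
theorem dRec_polynomial_in_r (n : ℕ) :
    ∃ p : Polynomial ℚ, p.degree = n ∧ ∀ r : ℕ, p.eval (r : ℚ) = dRec r n := by
  induction n with
  | zero => exact ⟨1, degree_one, fun r => by simp [dRec]⟩
  | succ n ihn =>
    obtain ⟨p, hpdeg, hpev⟩ := ihn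
    have hp0 : p ≠ 0 := fun h => by simp [h] at hpdeg
    have hpnd : p.natDegree = n := natDegree_eq_of_degree_eq_some hpdeg
    have hX1m : (X + 1 : ℚ[X]).Monic := by simpa using monic_X_add_C (1 : ℚ)
    have hX1nd : (X + 1 : ℚ[X]).natDegree = 1 := by simpa using natDegree_X_add_C (1:ℚ)
    have hX1lead : (X + 1 : ℚ[X]).leadingCoeff = 1 := hX1m
    set u : ℚ[X] := p.comp (X + 1) + p with hu
    have hcompnd : (p.comp (X + 1)).natDegree = n := by
      rw [natDegree_comp, hX1nd, hpnd, mul_one]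
    have hcomplead : (p.comp (X + 1)).leadingCoeff = p.leadingCoeff := by
      rw [leadingCoeff_comp (by rw [hX1nd]; norm_num), hX1lead, one_pow, mul_one]
    have hcomp0 : p.comp (X + 1) ≠ 0 := by
      rw [Ne, ← leadingCoeff_eq_zero, hcomplead, leadingCoeff_eq_zero]; exact hp0
    have hcompdeg : (p.comp (X + 1)).degree = (n : WithBot ℕ) := by
      rw [degree_eq_natDegree hcomp0, hcompnd]
    have hulead : u.coeff n = 2 * p.leadingCoeff := by
      have h1 : (p.comp (X + 1)).coeff n = p.leadingCoeff := by
        rw [← hcompnd, ← leadingCoeff, hcomplead]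
      rw [hu, coeff_add, h1, ← hpnd, ← leadingCoeff]
      ring
    have hudeg : u.degree = (n : WithBot ℕ) := by
      apply le_antisymm
      · apply (degree_add_le _ _).trans
        rw [max_le_iff]
        exact ⟨le_of_eq hcompdeg, le_of_eq hpdeg⟩
      · apply le_degree_of_ne_zero
        rw [hulead]
        simp [leadingCoeff_eq_zero, hp0]
    set q : ℚ[X] := C (2 * ((n : ℚ) + 1)) * u with hq
    have hq2 : (2 * ((n : ℚ) + 1)) ≠ 0 := by positivity
    have hqdeg : q.degree = (n : WithBot ℕ) := by rw [hq, degree_C_mul hq2, hudeg]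
    have hqnd : q.natDegree = n := natDegree_eq_of_degree_eq_some hqdeg
    obtain ⟨P, hΔ, hPdeg⟩ := exists_antideriv n q (le_of_eq hqnd)
    rw [hqdeg] at hPdeg
    set p' : ℚ[X] := P + C (dRec 0 (n + 1) - P.eval 0) with hp'
    have hPdeg' : P.degree = ((n : WithBot ℕ) + 1) := hPdeg
    refine ⟨p', ?_, ?_⟩
    · rw [hp', degree_add_eq_left_of_degree_lt, hPdeg']
      · push_cast; rfl
      · apply lt_of_le_of_lt (degree_C_le)
        rw [hPdeg']
        exact_mod_cast (by exact_mod_cast Nat.zero_lt_succ n : (0 : WithBot ℕ) < ((n : ℕ) + 1 : ℕ))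
    · have hqev : ∀ r : ℕ, q.eval (r : ℚ) = 2 * ((n : ℚ) + 1) * dRec (r + 1) n + 2 * ((n : ℚ) + 1) * dRec r n := by
        intro r
        rw [hq, hu]
        simp only [eval_mul, eval_C, eval_add, eval_comp, eval_X, eval_one]
        have : (r : ℚ) + 1 = ((r + 1 : ℕ) : ℚ) := by push_cast; ring
        rw [this, hpev, hpev]
        ring
      have hstep : ∀ r : ℕ, P.eval ((r : ℚ) + 1) - P.eval (r : ℚ) = q.eval (r : ℚ) := by
        intro r
        have := congrArg (fun f : ℚ[X] => f.eval (r : ℚ)) hΔ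
        simpa [eval_comp] using this
      intro r
      induction r with
      | zero => simp [hp']
      | succ r ihr =>
        have h1 : p'.eval ((r + 1 : ℕ) : ℚ) = p'.eval (r : ℚ) + q.eval (r : ℚ) := by
          rw [hp']
          simp only [eval_add, eval_C]
          push_cast
          linarith [hstep r]
        rw [h1, ihr, hqev, dRec]
        ring
end

section
/- The exponential generating function identity ∑_{n=0}^∞ d_{r,n}^B x^n / n! = (e^{-x}/(1-2x)) * ((1+2x)/(1-2x))^r holds as formal power series, where d_{r,n}^B = 2^n ∑_{i=0}^{r} C(r,i) n^{\underline{i}} 2^i ∑_{k=0}^{n-i} C(n-i,k) (-1)^k (i+1)^{\overline{n-i-k}} 2^{-k}. -/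
/-!
The substitution `x ↦ 2x` (`rescale 2`) turns the right-hand side into
`e^{-x/2} (1-x)⁻¹ ((1+x)/(1-x))^r` and divides the `n`-th coefficient of the left-hand side by
`2^n`. Since `(1+x)/(1-x) = 1 + 2x/(1-x)`, the binomial theorem writes the rescaled series as
`∑ᵢ C(r,i) 2^i x^i e^{-x/2} (1-x)^{-(i+1)}`. In exponential generating functions,
`(1-x)^{-(i+1)}` has coefficients `(i+1)^{\overline m}`, multiplying two of them is the binomial
convolution of their coefficients, and multiplying by `x^i` shifts by `i` and multiplies by
`n^{\underline i}`; this produces the inner sums of `d_{r,n}^B / 2^n` term by term.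
-/

open Finset PowerSeries

open Nat

namespace PowerSeries

variable {K : Type*} [Field K]

noncomputable def egf : (ℕ → K) →ₗ[K] K⟦X⟧ where
  toFun a := mk fun n => a n / (n ! : K)
  map_add' a b := by ext n; simp [add_div]
  map_smul' c a := by ext n; simp [mul_div_assoc]

@[simp]
theorem coeff_egf (a : ℕ → K) (n : ℕ) : coeff n (egf a) = a n / (n ! : K) :=
  coeff_mk n fun n => a n / (n ! : K)

theorem rescale_egf (c : K) (a : ℕ → K) :
    rescale c (egf a) = egf fun n => c ^ n * a n := by
  ext n
  simp [coeff_rescale, mul_div_assoc]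

theorem rescale_inv (c : K) (f : K⟦X⟧) : rescale c f⁻¹ = (rescale c f)⁻¹ := by
  have hconst : constantCoeff (rescale c f) = constantCoeff f := by
    rw [← coeff_zero_eq_constantCoeff_apply, ← coeff_zero_eq_constantCoeff_apply, coeff_rescale,
      pow_zero, one_mul]
  by_cases hf : constantCoeff f = 0
  · rw [inv_eq_zero.mpr hf, map_zero, eq_comm, inv_eq_zero, hconst, hf]
  · rw [eq_inv_iff_mul_eq_one (hconst ▸ hf), ← map_mul, PowerSeries.inv_mul_cancel f hf,
      map_one]

variable [CharZero K]

theorem X_pow_mul_egf (i : ℕ) (a : ℕ → K) :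
    X ^ i * egf a = egf fun n => n.descFactorial i * a (n - i) := by
  ext n
  rw [coeff_X_pow_mul', coeff_egf]
  split_ifs with hin
  · have hdesc : (n.descFactorial i : K) ≠ 0 :=
      cast_ne_zero.mpr (descFactorial_eq_zero_iff_lt.not.mpr (not_lt.mpr hin))
    rw [coeff_egf, ← factorial_mul_descFactorial hin, cast_mul, mul_comm ((n - i)! : K),
      mul_div_mul_left _ _ hdesc]
  · simp [descFactorial_eq_zero_iff_lt.mpr (not_le.mp hin)]

theorem egf_mul (a b : ℕ → K) :
    egf a * egf b = egf fun n => ∑ k ∈ range (n + 1), (n.choose k : K) * a k * b (n - k) := by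
  ext n
  rw [coeff_mul, Nat.sum_antidiagonal_eq_sum_range_succ_mk, coeff_egf, sum_div]
  refine sum_congr rfl fun k hk => ?_
  rw [cast_choose K (mem_range_succ_iff.mp hk)]
  simp only [coeff_egf]
  have hn : (n ! : K) ≠ 0 := cast_ne_zero.mpr n.factorial_ne_zero
  field_simp

theorem inv_one_sub_X_pow_eq_egf_ascFactorial (i : ℕ) :
    (1 - X : K⟦X⟧)⁻¹ ^ (i + 1) = egf fun m => ((i + 1).ascFactorial m : K) := by
  have hchoose :
      egf (fun m => ((i + 1).ascFactorial m : K)) = mk fun m => ((i + m).choose i : K) := by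
    ext m
    rw [coeff_egf, coeff_mk, ascFactorial_eq_factorial_mul_choose, choose_symm_add, cast_mul,
      mul_div_cancel_left₀ _ (cast_ne_zero.mpr m.factorial_ne_zero)]
  have hunit : (1 - X : K⟦X⟧) ^ (i + 1) * (1 - X)⁻¹ ^ (i + 1) = 1 := by
    rw [← mul_pow, PowerSeries.mul_inv_cancel _ (by simp), one_pow]
  calc (1 - X : K⟦X⟧)⁻¹ ^ (i + 1)
      = (mk fun m => ((i + m).choose i : K)) * (1 - X) ^ (i + 1) * (1 - X)⁻¹ ^ (i + 1) := by
        rw [mk_add_choose_mul_one_sub_pow_eq_one, one_mul]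
    _ = _ := by rw [mul_assoc, hunit, mul_one, hchoose]

end PowerSeries

def dBRescaled {R : Type*} [CommRing R] (c : R) (r n : ℕ) : R :=
  ∑ i ∈ range (r + 1), (r.choose i : R) * n.descFactorial i * 2 ^ i *
    ∑ k ∈ range (n - i + 1), ((n - i).choose k : R) * c ^ k * (i + 1).ascFactorial (n - i - k)

theorem dB_eq_two_pow_mul_dBRescaled (r n : ℕ) : dB r n = 2 ^ n * dBRescaled (-1 / 2) r n := by
  simp only [dB, dBRescaled, div_pow]
  congr 1
  exact sum_congr rfl fun i _ => congrArg _ (sum_congr rfl fun k _ => by ring)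

theorem egf_dBRescaled {K : Type*} [Field K] [CharZero K] (c : K) (r : ℕ) :
    egf (dBRescaled c r) = egf (c ^ ·) * (1 - X)⁻¹ * ((1 + X) * (1 - X)⁻¹) ^ r := by
  set G := (1 - X : K⟦X⟧)⁻¹
  have hG : (1 + X) * G = 1 + 2 * X * G := by
    linear_combination PowerSeries.mul_inv_cancel (1 - X : K⟦X⟧) (by simp)
  have hterm (i : ℕ) : egf (c ^ ·) * G ^ (i + 1) * X ^ i = egf fun n => n.descFactorial i *
      ∑ k ∈ range (n - i + 1),
        ((n - i).choose k : K) * c ^ k * (i + 1).ascFactorial (n - i - k) := by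
    rw [inv_one_sub_X_pow_eq_egf_ascFactorial, egf_mul, mul_comm, X_pow_mul_egf]
  symm
  calc egf (c ^ ·) * G * ((1 + X) * G) ^ r
      = ∑ i ∈ range (r + 1),
          ((r.choose i : K) * 2 ^ i) • (egf (c ^ ·) * G ^ (i + 1) * X ^ i) := by
        rw [hG, add_comm, add_pow, mul_sum]
        refine sum_congr rfl fun i _ => ?_
        rw [smul_eq_C_mul, map_mul, map_pow, map_natCast, map_ofNat]
        ring
    _ = egf (dBRescaled c r) := by
        simp_rw [hterm, ← map_smul, ← map_sum]
        congr 1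
        ext n
        simp only [dBRescaled, Finset.sum_apply, Pi.smul_apply, smul_eq_mul]
        exact sum_congr rfl fun i _ => by ring

/-- `∑_{n≥0} d_{r,n}^B x^n/n! = (e^{-x}/(1-2x)) ((1+2x)/(1-2x))^r`
as formal power series over `ℚ`. -/
theorem dB_egf (r : ℕ) :
    PowerSeries.mk (fun n => dB r n / (n.factorial : ℚ)) =
      PowerSeries.mk (fun n => (-1 : ℚ) ^ n / (n.factorial : ℚ)) *
        (1 - 2 * PowerSeries.X : PowerSeries ℚ)⁻¹ *
        ((1 + 2 * PowerSeries.X) * (1 - 2 * PowerSeries.X : PowerSeries ℚ)⁻¹) ^ r := by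
  have hsign : (fun n => (-1 : ℚ) ^ n) = fun n => 2 ^ n * (-1 / 2) ^ n := by
    ext n
    rw [← mul_pow]
    norm_num
  change egf (dB r) = egf (fun n => (-1 : ℚ) ^ n) * _ * _
  rw [funext (dB_eq_two_pow_mul_dBRescaled r), hsign, ← rescale_egf, ← rescale_egf,
    egf_dBRescaled]
  simp [rescale_inv, rescale_X, map_ofNat]
end

section
/- The associated Stirling numbers of the first kind satisfy the recurrence [n over k]_{≥m} = ∑_{i=m-1}^{n-1} ((n-1)!/(n-1-i)!) * [n-i-1 over k-1]_{≥m} for n, k ≥ 1, with [0 over 0]_{≥m} = 1 and [n over 0]_{≥m} = [0 over n]_{≥m} = 0 for n > 0. -/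
open Finset Equiv

/-- The number of cycles of a permutation of `Fin n`, counting fixed points as
1-cycles. -/
def cycleCount {n : ℕ} (σ : Equiv.Perm (Fin n)) : ℕ :=
  σ.cycleType.card + (Finset.univ.filter fun x => σ x = x).card

/-- `[n over k]_{≥ m}`: the number of permutations of `Fin n` with exactly `k`
cycles, each of length at least `m`.  (The lengths of nontrivial cycles are
recorded by `cycleType`; a fixed point is a cycle of length `1`, allowed only
when `m ≤ 1`.) -/
noncomputable def stirAssociated (m n k : ℕ) : ℕ :=
  Nat.card {σ : Equiv.Perm (Fin n) //
    cycleCount σ = k ∧ (∀ c ∈ σ.cycleType, m ≤ c) ∧ ∀ x, σ x = x → m ≤ 1}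

/-!
Classify the permutations of an `(N + 1)`-element set by the cycle through a chosen point `a`.
If that cycle has length `i + 1`, it is `a ↦ f 0 ↦ ⋯ ↦ f (i - 1) ↦ a` for an injection `f`
of `Fin i` into the `N` other points (`N.descFactorial i` choices), and the permutation is
this cycle times an arbitrary permutation `τ` of the remaining `N - i` points. Recording cycle
lengths by `Equiv.Perm.partition` (fixed points are parts equal to `1`), the cycle through `a`
contributes the single part `i + 1` also when `i = 0`, so the permutation has `k` cycles of
length `≥ m` exactly when `m ≤ i + 1` and `τ` has `k - 1` such cycles.
-/

open Equiv.Perm Function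

variable {α β : Type*}

section Partition

variable [Fintype α] [DecidableEq α] [Fintype β] [DecidableEq β]

def IsAssocStirling (m k : ℕ) (σ : Perm α) : Prop :=
  σ.partition.parts.card = k ∧ ∀ c ∈ σ.partition.parts, m ≤ c

lemma card_filter_apply_eq_self (σ : Perm α) :
    #{x | σ x = x} = Fintype.card α - #σ.support := by
  rw [← card_compl]
  congr 1
  ext x
  simp

lemma forall_mem_replicate_card_fixed_iff (σ : Perm α) (m : ℕ) :
    (∀ c ∈ Multiset.replicate (Fintype.card α - #σ.support) 1, m ≤ c) ↔
      ∀ x, σ x = x → m ≤ 1 := by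
  rw [← card_filter_apply_eq_self]
  simp only [Multiset.mem_replicate, ne_eq, card_eq_zero, filter_eq_empty_iff]
  grind

lemma card_parts_partition_eq_zero_iff (σ : Perm α) :
    σ.partition.parts.card = 0 ↔ Fintype.card α = 0 := by
  refine ⟨fun h => ?_, fun h => ?_⟩
  · rw [← σ.partition.parts_sum, Multiset.card_eq_zero.mp h, Multiset.sum_zero]
  · refine Multiset.card_eq_zero.mpr (Multiset.eq_zero_of_forall_notMem fun c hc => ?_)
    have := Multiset.le_sum_of_mem hc
    rw [σ.partition.parts_sum, h] at this
    exact (σ.partition.parts_pos hc).ne' (Nat.le_zero.mp this)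

lemma stirAssociated_eq_card (m n k : ℕ) :
    stirAssociated m n k = Nat.card {σ : Perm (Fin n) // IsAssocStirling m k σ} :=
  Nat.card_congr <| Equiv.subtypeEquivRight fun σ => by
    simp only [IsAssocStirling, cycleCount, parts_partition, Multiset.card_add,
      Multiset.card_replicate, card_filter_apply_eq_self, Multiset.mem_add, or_imp, forall_and,
      forall_mem_replicate_card_fixed_iff]

lemma parts_partition_permCongr (e : α ≃ β) (σ : Perm α) :
    (e.permCongr σ).partition.parts = σ.partition.parts := by
  have hext : e.permCongr σ =
      σ.extendDomain (e.trans (Equiv.subtypeUnivEquiv fun _ => trivial).symm) := by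
    ext x
    rw [extendDomain_apply_subtype _ _ trivial]
    simp [Equiv.subtypeUnivEquiv]
  rw [parts_partition, parts_partition, hext, cycleType_extendDomain, card_support_extend_domain,
    Fintype.card_congr e]

lemma card_isAssocStirling_congr (m k : ℕ) (e : α ≃ β) :
    Nat.card {σ : Perm α // IsAssocStirling m k σ} =
      Nat.card {σ : Perm β // IsAssocStirling m k σ} :=
  Nat.card_congr <| e.permCongr.subtypeEquiv fun σ => by
    simp only [IsAssocStirling, parts_partition_permCongr]

lemma disjoint_ofSubtype_of_support_subset {s : Finset α} {c : Perm α} (hc : c.support ⊆ s)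
    (τ : Perm {x // x ∉ s}) : c.Disjoint (ofSubtype τ) := fun x => by
  by_cases hx : x ∈ s
  · exact Or.inr (ofSubtype_apply_of_not_mem τ (not_not.mpr hx))
  · exact Or.inl (notMem_support.mp fun h => hx (hc h))

lemma parts_partition_mul_ofSubtype {s : Finset α} {c : Perm α} (hc : c.support ⊆ s)
    (τ : Perm {x // x ∉ s}) :
    (c * ofSubtype τ).partition.parts =
      c.cycleType + Multiset.replicate (#s - #c.support) 1 + τ.partition.parts := by
  have hdisj := disjoint_ofSubtype_of_support_subset hc τ
  have hcard : Fintype.card α = #s + Fintype.card {x // x ∉ s} := by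
    rw [Fintype.card_subtype_compl, Fintype.card_coe, Nat.add_sub_cancel' (card_le_univ s)]
  have hsupp : #c.support ≤ #s := card_le_card hc
  have hsuppτ : #τ.support ≤ Fintype.card {x // x ∉ s} := card_le_univ _
  rw [parts_partition, parts_partition, hdisj.cycleType_mul, hdisj.card_support_mul,
    cycleType_ofSubtype, support_ofSubtype, card_map, hcard,
    show #s + Fintype.card {x // x ∉ s} - (#c.support + #τ.support) =
      (#s - #c.support) + (Fintype.card {x // x ∉ s} - #τ.support) by omega,
    Multiset.replicate_add]
  abel

lemma cycleType_formPerm_add_replicate {l : List α} (hl : l.Nodup) (hne : l ≠ []) :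
    l.formPerm.cycleType + Multiset.replicate (#l.toFinset - #l.formPerm.support) 1 =
      {l.length} := by
  rcases l with _ | ⟨x, _ | ⟨y, l⟩⟩
  · exact absurd rfl hne
  · simp
  · rw [(List.isCycle_formPerm hl (by simp)).cycleType,
      List.support_formPerm_of_nodup _ hl (by simp), List.toFinset_card_of_nodup hl]
    simp

end Partition

section ConsCycle

variable (a : α) {i : ℕ} (f : Fin i ↪ {x // x ≠ a})

def orbitList : List α := a :: List.ofFn fun j => (f j : α)

@[simp]
lemma length_orbitList : (orbitList a f).length = i + 1 := by
  simp [orbitList]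

@[simp]
lemma getElem_orbitList_zero : (orbitList a f)[0] = a := rfl

lemma getElem_orbitList_succ (j : Fin i) : (orbitList a f)[(j : ℕ) + 1]'(by simp) = f j := by
  simp [orbitList]

lemma nodup_orbitList : (orbitList a f).Nodup := by
  refine List.nodup_cons.mpr ⟨?_, List.nodup_ofFn.mpr fun j j' h => f.injective (Subtype.ext h)⟩
  simp only [List.mem_ofFn, not_exists]
  exact fun j => (f j).2

variable [DecidableEq α]

def consCycle (τ : Perm {x // x ∉ (orbitList a f).toFinset}) : Perm α :=
  (orbitList a f).formPerm * ofSubtype τ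

variable (τ : Perm {x // x ∉ (orbitList a f).toFinset})

lemma consCycle_apply_of_mem {x : α} (hx : x ∈ orbitList a f) :
    consCycle a f τ x = (orbitList a f).formPerm x := by
  rw [consCycle, mul_apply, ofSubtype_apply_of_not_mem τ (by simpa using hx)]

lemma consCycle_apply_of_notMem {x : α} (hx : x ∉ (orbitList a f).toFinset) :
    consCycle a f τ x = τ ⟨x, hx⟩ := by
  rw [consCycle, mul_apply, ofSubtype_apply_of_mem τ hx]
  exact List.formPerm_apply_of_notMem (by simpa using (τ ⟨x, hx⟩).2)

variable [Fintype α]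

lemma card_compl_orbitList :
    Fintype.card {x // x ∉ (orbitList a f).toFinset} = Fintype.card α - (i + 1) := by
  rw [Fintype.card_subtype_compl, Fintype.card_coe,
    List.toFinset_card_of_nodup (nodup_orbitList a f), length_orbitList]

lemma parts_partition_consCycle :
    (consCycle a f τ).partition.parts = (i + 1) ::ₘ τ.partition.parts := by
  rw [consCycle, parts_partition_mul_ofSubtype (List.support_formPerm_le _),
    cycleType_formPerm_add_replicate (nodup_orbitList a f) (List.cons_ne_nil _ _),
    length_orbitList, Multiset.singleton_add]

lemma isAssocStirling_consCycle_iff {m k : ℕ} (hk : 1 ≤ k) :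
    IsAssocStirling m k (consCycle a f τ) ↔ m ≤ i + 1 ∧ IsAssocStirling m (k - 1) τ := by
  have hcard : τ.partition.parts.card + 1 = k ↔ τ.partition.parts.card = k - 1 := by omega
  simp only [IsAssocStirling, parts_partition_consCycle, Multiset.card_cons,
    Multiset.forall_mem_cons, hcard]
  tauto

lemma consCycle_pow_apply_self (n : ℕ) :
    (consCycle a f τ ^ n) a = ((orbitList a f).formPerm ^ n) a := by
  have hfix : (ofSubtype τ ^ n) a = a := by
    rw [← map_pow]
    exact ofSubtype_apply_of_not_mem _ (by simp [orbitList])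
  rw [consCycle,
    (disjoint_ofSubtype_of_support_subset (List.support_formPerm_le _) τ).commute.mul_pow,
    mul_apply, hfix]

lemma consCycle_pow_succ_apply_self (j : Fin i) : (consCycle a f τ ^ (j + 1 : ℕ)) a = f j := by
  have h := List.formPerm_pow_apply_getElem _ (nodup_orbitList a f) (j + 1) 0 (by simp)
  simp only [getElem_orbitList_zero, zero_add, length_orbitList,
    Nat.mod_eq_of_lt (Nat.succ_lt_succ j.isLt), getElem_orbitList_succ] at h
  rw [consCycle_pow_apply_self, h]

lemma minimalPeriod_consCycle : minimalPeriod (consCycle a f τ) a = i + 1 := by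
  have hper : IsPeriodicPt (consCycle a f τ) (i + 1) a := by
    rw [IsPeriodicPt, IsFixedPt, ← coe_pow, consCycle_pow_apply_self, ← length_orbitList a f,
      List.formPerm_pow_length_eq_one_of_nodup _ (nodup_orbitList a f), one_apply]
  refine le_antisymm (hper.minimalPeriod_le i.succ_pos) (Nat.le_of_dvd
    (hper.minimalPeriod_pos i.succ_pos) (Nat.dvd_of_mod_eq_zero ?_))
  have h := List.formPerm_pow_apply_getElem _ (nodup_orbitList a f)
    (minimalPeriod (consCycle a f τ) a) 0 (by simp)
  rw [getElem_orbitList_zero, ← consCycle_pow_apply_self a f τ, coe_pow, iterate_minimalPeriod,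
    zero_add] at h
  simpa using ((nodup_orbitList a f).getElem_inj_iff (j := 0) (hj := by simp)).mp h.symm

lemma consCycle_injective :
    Injective fun p : Σ f : Fin i ↪ {x // x ≠ a}, Perm {x // x ∉ (orbitList a f).toFinset} =>
      consCycle a p.1 p.2 := by
  rintro ⟨f, τ⟩ ⟨f', τ'⟩ h
  obtain rfl : f = f' := by
    ext j
    rw [← consCycle_pow_succ_apply_self a f τ, ← consCycle_pow_succ_apply_self a f' τ']
    exact congrArg (fun σ : Perm α => (σ ^ (j + 1 : ℕ)) a) h
  obtain rfl : τ = τ' := ofSubtype_injective (mul_left_cancel h)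
  rfl

end ConsCycle

section OrbitEmb

variable {σ : Perm α} {a : α} {i : ℕ}

lemma pow_apply_injOn_of_minimalPeriod_eq (hσ : minimalPeriod σ a = i + 1) :
    Set.InjOn (fun n : ℕ => (σ ^ n) a) (Set.Iio (i + 1)) := by
  simpa only [coe_pow, hσ] using iterate_injOn_Iio_minimalPeriod (f := σ) (x := a)

lemma pow_mod_apply_of_minimalPeriod_eq (hσ : minimalPeriod σ a = i + 1) (n : ℕ) :
    (σ ^ (n % (i + 1))) a = (σ ^ n) a := by
  rw [coe_pow, coe_pow, ← hσ]
  exact iterate_mod_minimalPeriod_eq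

def orbitEmb (hσ : minimalPeriod σ a = i + 1) : Fin i ↪ {x // x ≠ a} where
  toFun j := ⟨(σ ^ (j + 1 : ℕ)) a, fun h => by
    simpa using pow_apply_injOn_of_minimalPeriod_eq hσ (by simp : j + 1 < i + 1)
      (by simp : 0 < i + 1) (by simpa using h)⟩
  inj' j j' h := Fin.ext <| by
    simpa using pow_apply_injOn_of_minimalPeriod_eq hσ (by simp : j + 1 < i + 1)
      (by simp : j' + 1 < i + 1) (congrArg Subtype.val h)

lemma getElem_orbitList_orbitEmb (hσ : minimalPeriod σ a = i + 1) (j : ℕ) (hj : j < i + 1) :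
    (orbitList a (orbitEmb hσ))[j]'(by simpa using hj) = (σ ^ j) a := by
  rcases j with _ | j
  · rfl
  · exact getElem_orbitList_succ a (orbitEmb hσ) ⟨j, by omega⟩

lemma mem_orbitList_orbitEmb_iff [Finite α] (hσ : minimalPeriod σ a = i + 1) (x : α) :
    x ∈ orbitList a (orbitEmb hσ) ↔ σ.SameCycle a x := by
  constructor
  · intro hx
    obtain ⟨j, hj, rfl⟩ := List.getElem_of_mem hx
    rw [getElem_orbitList_orbitEmb hσ j (by simpa using hj)]
    exact ⟨j, by simp⟩
  · intro hx
    obtain ⟨n, -, rfl⟩ := hx.exists_pow_eq'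
    rw [← pow_mod_apply_of_minimalPeriod_eq hσ,
      ← getElem_orbitList_orbitEmb hσ _ (Nat.mod_lt _ i.succ_pos)]
    exact List.getElem_mem _

variable [Finite α] [DecidableEq α]

def complOrbitPerm (hσ : minimalPeriod σ a = i + 1) :
    Perm {x // x ∉ (orbitList a (orbitEmb hσ)).toFinset} :=
  σ.subtypePerm fun x => by simp [mem_orbitList_orbitEmb_iff, sameCycle_apply_right]

lemma consCycle_orbitEmb (hσ : minimalPeriod σ a = i + 1) :
    consCycle a (orbitEmb hσ) (complOrbitPerm hσ) = σ := by
  ext x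
  by_cases hx : x ∈ orbitList a (orbitEmb hσ)
  · obtain ⟨j, hj, rfl⟩ := List.getElem_of_mem hx
    have hj' : j < i + 1 := by simpa using hj
    rw [consCycle_apply_of_mem _ _ _ hx, List.formPerm_apply_getElem _ (nodup_orbitList _ _)]
    simp only [length_orbitList, getElem_orbitList_orbitEmb hσ _ (Nat.mod_lt _ i.succ_pos),
      getElem_orbitList_orbitEmb hσ _ hj', pow_mod_apply_of_minimalPeriod_eq hσ, pow_succ',
      mul_apply]
  · rw [consCycle_apply_of_notMem _ _ _ (by simpa using hx)]
    rfl

end OrbitEmb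

lemma minimalPeriod_pos_of_perm [Finite α] (σ : Perm α) (a : α) : 0 < minimalPeriod σ a :=
  IsPeriodicPt.minimalPeriod_pos (orderOf_pos σ) <| by
    rw [IsPeriodicPt, IsFixedPt, ← coe_pow, pow_orderOf_eq_one, one_apply]

section Counting

variable [Fintype α] [DecidableEq α]

noncomputable def consCycleEquiv (a : α) (i : ℕ) (Q : Perm α → Prop) :
    {σ : Perm α // minimalPeriod σ a = i + 1 ∧ Q σ} ≃
      Σ f : Fin i ↪ {x // x ≠ a},
        {τ : Perm {x // x ∉ (orbitList a f).toFinset} // Q (consCycle a f τ)} := by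
  refine .symm <| .ofBijective
    (fun p => ⟨consCycle a p.1 p.2.1, minimalPeriod_consCycle a p.1 p.2.1, p.2.2⟩) ⟨?_, ?_⟩
  · rintro ⟨f, τ, _⟩ ⟨f', τ', _⟩ h
    obtain ⟨rfl, hττ'⟩ :=
      Sigma.mk.inj_iff.mp (consCycle_injective a (congrArg Subtype.val h))
    cases eq_of_heq hττ'
    rfl
  · rintro ⟨σ, hσ, hQ⟩
    exact ⟨⟨orbitEmb hσ, complOrbitPerm hσ, (consCycle_orbitEmb hσ).symm ▸ hQ⟩,
      Subtype.ext (consCycle_orbitEmb hσ)⟩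

lemma card_isAssocStirling_eq_sum_minimalPeriod (m k : ℕ) {N : ℕ}
    (hα : Fintype.card α = N + 1) (a : α) :
    Nat.card {σ : Perm α // IsAssocStirling m k σ} =
      ∑ i ∈ range (N + 1),
        Nat.card {σ : Perm α // minimalPeriod σ a = i + 1 ∧ IsAssocStirling m k σ} := by
  classical
  rw [Nat.card_eq_fintype_card, Fintype.card_subtype,
    card_eq_sum_card_fiberwise (f := fun σ : Perm α => minimalPeriod σ a - 1)
      (t := range (N + 1))]
  · refine sum_congr rfl fun i _ => ?_
    rw [Nat.card_eq_fintype_card, Fintype.card_subtype, filter_filter]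
    congr 1
    refine filter_congr fun σ _ => ?_
    have := minimalPeriod_pos_of_perm σ a
    constructor <;> rintro ⟨h1, h2⟩ <;> exact ⟨by omega, by omega⟩
  · intro σ _
    have := minimalPeriod_le_card (f := σ) (x := a)
    simp only [coe_range, Set.mem_Iio]
    omega

lemma card_minimalPeriod_eq_and_isAssocStirling (m : ℕ) {k : ℕ} (hk : 1 ≤ k) {N : ℕ}
    (hα : Fintype.card α = N + 1) (a : α) (i : ℕ) :
    Nat.card {σ : Perm α // minimalPeriod σ a = i + 1 ∧ IsAssocStirling m k σ} =
      N.descFactorial i * if m ≤ i + 1 then stirAssociated m (N - i) (k - 1) else 0 := by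
  have hfiber (f : Fin i ↪ {x // x ≠ a}) :
      Nat.card {τ : Perm {x // x ∉ (orbitList a f).toFinset} //
        IsAssocStirling m k (consCycle a f τ)} =
      if m ≤ i + 1 then stirAssociated m (N - i) (k - 1) else 0 := by
    simp only [isAssocStirling_consCycle_iff a f _ hk]
    split_ifs with hm
    · rw [stirAssociated_eq_card, ← card_isAssocStirling_congr m (k - 1)
        (Fintype.equivFinOfCardEq (α := {x // x ∉ (orbitList a f).toFinset})
          (by rw [card_compl_orbitList, hα]; omega))]
      simp [hm]
    · simp [hm]
  rw [Nat.card_congr (consCycleEquiv a i _), Nat.card_sigma]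
  simp only [hfiber, sum_const, card_univ, Fintype.card_embedding_eq, Fintype.card_fin,
    smul_eq_mul, Fintype.card_subtype_compl, Fintype.card_unique, hα, Nat.add_sub_cancel]

lemma card_isAssocStirling_of_card_eq_succ (m : ℕ) {k : ℕ} (hk : 1 ≤ k) {N : ℕ}
    (hα : Fintype.card α = N + 1) :
    Nat.card {σ : Perm α // IsAssocStirling m k σ} =
      ∑ i ∈ Ico (m - 1) (N + 1), N.descFactorial i * stirAssociated m (N - i) (k - 1) := by
  obtain ⟨a⟩ : Nonempty α := Fintype.card_pos_iff.mp (by omega)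
  rw [card_isAssocStirling_eq_sum_minimalPeriod m k hα a]
  simp only [card_minimalPeriod_eq_and_isAssocStirling m hk hα a, mul_ite, mul_zero,
    ← sum_filter]
  congr 1
  ext i
  simp only [mem_filter, mem_range, mem_Ico]
  omega

end Counting

lemma stirAssociated_zero_zero (m : ℕ) : stirAssociated m 0 0 = 1 := by
  have hall (σ : Perm (Fin 0)) : IsAssocStirling m 0 σ := by
    have h := (card_parts_partition_eq_zero_iff σ).mpr (Fintype.card_fin 0)
    exact ⟨h, by simp [Multiset.card_eq_zero.mp h]⟩
  rw [stirAssociated_eq_card, Nat.card_congr (Equiv.subtypeUnivEquiv hall), Nat.card_perm,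
    Nat.card_of_isEmpty, Nat.factorial_zero]

lemma stirAssociated_eq_zero_of_iff_ne (m : ℕ) {n k : ℕ} (h : n = 0 ↔ k ≠ 0) :
    stirAssociated m n k = 0 := by
  rw [stirAssociated_eq_card, Nat.card_eq_zero]
  refine .inl ⟨fun ⟨σ, hσ, _⟩ => ?_⟩
  have := card_parts_partition_eq_zero_iff σ
  rw [hσ, Fintype.card_fin] at this
  tauto

theorem stirAssociated_recurrence_general (m : ℕ) :
    stirAssociated m 0 0 = 1 ∧
      (∀ n : ℕ, 0 < n → stirAssociated m n 0 = 0 ∧ stirAssociated m 0 n = 0) ∧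
      ∀ n k : ℕ, 1 ≤ n → 1 ≤ k →
        stirAssociated m n k =
          ∑ i ∈ Finset.Ico (m - 1) n,
            (n - 1).descFactorial i * stirAssociated m (n - i - 1) (k - 1) := by
  refine ⟨stirAssociated_zero_zero m,
    fun n hn => ⟨stirAssociated_eq_zero_of_iff_ne m (by omega),
      stirAssociated_eq_zero_of_iff_ne m (by omega)⟩, fun n k hn hk => ?_⟩
  obtain ⟨N, rfl⟩ : ∃ N, n = N + 1 := ⟨n - 1, by omega⟩
  rw [stirAssociated_eq_card, card_isAssocStirling_of_card_eq_succ m hk (Fintype.card_fin _)]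
  refine sum_congr rfl fun i _ => ?_
  rw [Nat.add_sub_cancel, Nat.sub_right_comm, Nat.add_sub_cancel]

/-- The recurrence for the associated Stirling numbers of the first kind:
`[n over k]_{≥m} = ∑_{i=m-1}^{n-1} (n-1)!/(n-1-i)! [n-i-1 over k-1]_{≥m}`. -/
theorem stirAssociated_recurrence (m : ℕ) (hm : 1 ≤ m) :
    stirAssociated m 0 0 = 1 ∧
      (∀ n : ℕ, 0 < n → stirAssociated m n 0 = 0 ∧ stirAssociated m 0 n = 0) ∧
      ∀ n k : ℕ, 1 ≤ n → 1 ≤ k →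
        stirAssociated m n k =
          ∑ i ∈ Finset.Ico (m - 1) n,
            (n - 1).descFactorial i * stirAssociated m (n - i - 1) (k - 1) :=
  stirAssociated_recurrence_general m
end

section
/- Howard's identity for Stirling numbers of the first kind: [n over n-k] = ∑_{ℓ=0}^{k} C(n, 2k-ℓ) * [2k-ℓ over k-ℓ]_{≥2} for 0 ≤ k ≤ n, where [n over k] is the unsigned Stirling number of the first kind and [m over j]_{≥2} counts permutations of [m] with j cycles all of length at least 2. -/
open Finset Equiv

/-- The unsigned Stirling number of the first kind `[n over k]`: the number of
permutations of `Fin n` with exactly `k` cycles. -/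
noncomputable def stirFirst (n k : ℕ) : ℕ :=
  Nat.card {σ : Equiv.Perm (Fin n) // cycleCount σ = k}

/-- `[m over j]_{≥2}`: the number of permutations of `Fin m` with exactly `j`
cycles, all of length at least `2` (i.e. derangements with `j` cycles). -/
noncomputable def stirAssoc2 (m j : ℕ) : ℕ :=
  Nat.card {σ : Equiv.Perm (Fin m) // cycleCount σ = j ∧ ∀ x, σ x ≠ x}

/-!
Sort the permutations of `Fin n` by their support `S`. A permutation with support `S` is the
extension by the identity of a fixed-point-free permutation of `S`, and its `n - #S` fixed points
are cycles of their own, so it has `n - k` cycles exactly when the derangement of `S` has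
`#S - k` cycles. Such derangements exist only for `k ≤ #S ≤ 2k`, since each cycle has length at
least `2`. Summing over the `n.choose m` supports of each size `m = 2k - l` gives the identity.
-/

namespace Equiv.Perm

variable {α β : Type*} {p : β → Prop} [DecidablePred p]

theorem exists_extendDomain_eq (f : α ≃ Subtype p) {σ : Perm β}
    (hσ : ∀ x, ¬p x → σ x = x) : ∃ τ : Perm α, τ.extendDomain f = σ := by
  refine ⟨f.symm.permCongr ((Perm.subtypeEquivSubtypePerm p).symm ⟨σ, hσ⟩),
    Equiv.ext fun x => ?_⟩
  by_cases hx : p x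
  · simp [extendDomain_apply_subtype _ f hx, Equiv.permCongr_apply]
  · rw [extendDomain_apply_not_subtype _ f hx, hσ x hx]

end Equiv.Perm

open Equiv.Perm

theorem Finset.map_univ_asEmbedding {α β : Type*} [Fintype α] (S : Finset β) (f : α ≃ S) :
    univ.map f.asEmbedding = S := by
  ext x
  simpa using ⟨fun ⟨a, ha⟩ => ha ▸ (f a).2, fun h => ⟨f.symm ⟨x, h⟩, by simp⟩⟩

theorem card_filter_cycleType_support_eq {α : Type*} [Fintype α] [DecidableEq α]
    (S : Finset α) (c : ℕ) :
    #{σ : Perm α | σ.cycleType.card = c ∧ σ.support = S} =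
      #{τ : Perm (Fin #S) | τ.cycleType.card = c ∧ τ.support = univ} := by
  set f : Fin #S ≃ S := S.equivFin.symm
  have support_extendDomain (τ : Perm (Fin #S)) :
      (τ.extendDomain f).support = S ↔ τ.support = univ := by
    rw [support_extend_domain, ← map_inj (f := f.asEmbedding), map_univ_asEmbedding]
  symm
  refine card_bij (fun τ _ => τ.extendDomain f) ?_
    (fun τ₁ _ τ₂ _ h => extendDomainHom_injective f h) ?_
  · intro τ hτ
    simpa only [mem_filter, mem_univ, true_and, cycleType_extendDomain,
      support_extendDomain] using hτ
  · intro σ hσ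
    simp only [mem_filter, mem_univ, true_and] at hσ
    obtain ⟨τ, rfl⟩ := exists_extendDomain_eq f (p := (· ∈ S)) fun x hx =>
      notMem_support.1 (hσ.2 ▸ hx)
    refine ⟨τ, ?_, rfl⟩
    simpa only [mem_filter, mem_univ, true_and, cycleType_extendDomain,
      support_extendDomain] using hσ

theorem cycleCount_eq_card_cycleType_add {n : ℕ} (σ : Perm (Fin n)) :
    cycleCount σ = σ.cycleType.card + (n - #σ.support) := by
  have fixed_eq_compl : ({x | σ x = x} : Finset (Fin n)) = σ.supportᶜ := by
    ext x
    simp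
  rw [cycleCount, fixed_eq_compl, card_compl, Fintype.card_fin]

theorem stirAssoc2_eq_card_filter (m j : ℕ) :
    stirAssoc2 m j = #{σ : Perm (Fin m) | σ.cycleType.card = j ∧ σ.support = univ} := by
  rw [stirAssoc2, Nat.card_eq_fintype_card, Fintype.card_subtype]
  congr 1
  refine filter_congr fun σ _ => ?_
  have derangement_iff : (∀ x, σ x ≠ x) ↔ σ.support = univ := by
    simp [eq_univ_iff_forall]
  rw [derangement_iff, cycleCount_eq_card_cycleType_add, and_congr_left_iff]
  intro h
  simp [h]

theorem stirAssoc2_eq_zero_of_lt {m j : ℕ} (h : m < 2 * j) : stirAssoc2 m j = 0 := by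
  rw [stirAssoc2_eq_card_filter, card_eq_zero, filter_eq_empty_iff]
  rintro σ - ⟨hj, hsupp⟩
  have hsum : σ.cycleType.sum = m := by
    rw [sum_cycleType, hsupp, card_univ, Fintype.card_fin]
  have hle : σ.cycleType.card • 2 ≤ σ.cycleType.sum :=
    Multiset.card_nsmul_le_sum fun _ => two_le_of_mem_cycleType
  rw [hj, hsum, smul_eq_mul] at hle
  omega

theorem card_filter_cycleCount_support_eq {n k : ℕ} (hk : k ≤ n) (S : Finset (Fin n)) :
    #{σ : Perm (Fin n) | cycleCount σ = n - k ∧ σ.support = S} =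
      if k ≤ #S then stirAssoc2 #S (#S - k) else 0 := by
  have hS : #S ≤ n := card_le_univ S |>.trans_eq (card_fin n)
  split_ifs with hkS
  · rw [stirAssoc2_eq_card_filter, ← card_filter_cycleType_support_eq]
    congr 1
    refine filter_congr fun σ _ => ?_
    rw [cycleCount_eq_card_cycleType_add]
    constructor <;> rintro ⟨h, rfl⟩ <;> exact ⟨by omega, rfl⟩
  · rw [card_eq_zero, filter_eq_empty_iff]
    rintro σ - ⟨h, rfl⟩
    rw [cycleCount_eq_card_cycleType_add] at h
    omega

theorem stirFirst_sub_eq_sum_choose {n k : ℕ} (hk : k ≤ n) :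
    stirFirst n (n - k) =
      ∑ m ∈ range (n + 1), n.choose m * if k ≤ m then stirAssoc2 m (m - k) else 0 := by
  rw [stirFirst, Nat.card_eq_fintype_card, Fintype.card_subtype,
    card_eq_sum_card_fiberwise (f := support) (t := univ.powerset) fun σ _ => by simp]
  simp only [filter_filter, card_filter_cycleCount_support_eq hk]
  refine (sum_powerset_apply_card
    fun m => if k ≤ m then stirAssoc2 m (m - k) else 0).trans ?_
  rw [card_univ, Fintype.card_fin]
  rfl

theorem sum_choose_mul_stirAssoc2_reflect (n k : ℕ) :
    ∑ m ∈ range (n + 1), n.choose m * (if k ≤ m then stirAssoc2 m (m - k) else 0) =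
      ∑ l ∈ range (k + 1), n.choose (2 * k - l) * stirAssoc2 (2 * k - l) (k - l) := by
  set F : ℕ → ℕ := fun m => n.choose m * if k ≤ m then stirAssoc2 m (m - k) else 0
  have support_F {m : ℕ} (hm : F m ≠ 0) : m ≤ n ∧ k ≤ m ∧ m ≤ 2 * k := by
    simp only [F, ne_eq, mul_eq_zero, ite_eq_right_iff, not_or, not_forall,
      Nat.choose_eq_zero_iff, not_lt] at hm
    obtain ⟨hmn, hkm, hst⟩ := hm
    exact ⟨hmn, hkm, not_lt.1 fun h => hst (stirAssoc2_eq_zero_of_lt (by omega))⟩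
  calc ∑ m ∈ range (n + 1), F m
      = ∑ m ∈ range (n + 2 * k + 1), F m :=
        sum_subset (range_subset_range.2 (by omega)) fun m _ hm => by
          by_contra h
          have := support_F h
          simp only [mem_range] at hm
          omega
    _ = ∑ m ∈ Ico k (2 * k + 1), F m := by
        refine (sum_subset (fun m hm => ?_) fun m _ hm => ?_).symm
        · simp only [mem_Ico, mem_range] at hm ⊢
          omega
        · by_contra h
          have := support_F h
          simp only [mem_Ico] at hm
          omega
    _ = ∑ l ∈ range (k + 1), F (2 * k - l) := by
        rw [range_eq_Ico, sum_Ico_reflect F 0 (by omega)]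
        congr 2; omega
    _ = ∑ l ∈ range (k + 1), n.choose (2 * k - l) * stirAssoc2 (2 * k - l) (k - l) := by
        refine sum_congr rfl fun l hl => ?_
        simp only [mem_range] at hl
        simp only [F, if_pos (show k ≤ 2 * k - l by omega), show 2 * k - l - k = k - l by omega]

/-- Howard's identity:
`[n over n-k] = ∑_{ℓ=0}^k C(n, 2k-ℓ) [2k-ℓ over k-ℓ]_{≥2}` for `0 ≤ k ≤ n`. -/
theorem howard_identity (n k : ℕ) (hk : k ≤ n) :
    stirFirst n (n - k) =
      ∑ l ∈ Finset.range (k + 1), n.choose (2 * k - l) * stirAssoc2 (2 * k - l) (k - l) := by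
  rw [stirFirst_sub_eq_sum_choose hk, sum_choose_mul_stirAssoc2_reflect]
end
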